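/- arXiv:2204.07950 — 2 statements merged into one kernel-verified Lean document; each statement's English description precedes it below -/
import Mathlib

section
/- Let R be a finite field equipped with the discrete topology, Γ a set with at least two elements, φ: Γ → Γ a map, and w ∈ R^Γ a weight vector. Suppose ν ∈ Γ is a non-quasi-periodic point of φ with w_{φ^n(ν)} ≠ 0 for all n ≥ 0. Then for all E, F ⊆ ℕ∪{0}, the pair (x^E, x^F) is proximal for σ_{φ,w}. -/
open Function Set

namespace WGShift

variable {Γ R : Type*}

/-- The basic entourage `O_M` determined by a set of coordinates `M ⊆ Γ`. -/
def shiftOM (M : Set Γ) : Set ((Γ → R) × (Γ → R)) :=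
  {p | ∀ α ∈ M, p.1 α = p.2 α}

/-- Entourages of the product uniformity on `Γ → R` (with `R` discrete):
exactly the sets containing some `O_M` with `M` finite. -/
def IsEntourage (O : Set ((Γ → R) × (Γ → R))) : Prop :=
  ∃ M : Set Γ, M.Finite ∧ shiftOM M ⊆ O

/-- The weighted generalized shift `σ_{φ,w}`. -/
def wshift [Mul R] (φ : Γ → Γ) (w : Γ → R) : (Γ → R) → (Γ → R) :=
  fun x α => w α * x (φ α)

/-- `α` is quasi-periodic under `φ` if `φ^i α = φ^j α` for some `i > j ≥ 1`. -/
def IsQuasiPeriodic (φ : Γ → Γ) (α : Γ) : Prop :=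
  ∃ i j : ℕ, 1 ≤ j ∧ j < i ∧ φ^[i] α = φ^[j] α

/-- Sensitivity of `(R^Γ, f)` with respect to the product uniformity. -/
def Sensitive [TopologicalSpace R] (f : (Γ → R) → (Γ → R)) : Prop :=
  ∃ O : Set ((Γ → R) × (Γ → R)), IsEntourage O ∧
    ∀ x : Γ → R, ∀ U : Set (Γ → R), IsOpen U → x ∈ U →
      ∃ y ∈ U, ∃ n : ℕ, (f^[n] x, f^[n] y) ∉ O

/-- Strong sensitivity of `(R^Γ, f)` with respect to the product uniformity. -/
def StronglySensitive [TopologicalSpace R] (f : (Γ → R) → (Γ → R)) : Prop :=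
  ∃ O : Set ((Γ → R) × (Γ → R)), IsEntourage O ∧
    ∀ x : Γ → R, ∀ U : Set (Γ → R), IsOpen U → x ∈ U →
      ∃ y ∈ U, ∃ N : ℕ, ∀ n ≥ N, (f^[n] x, f^[n] y) ∉ O

/-- `x, y` are proximal for `f`. -/
def ProximalPair (f : (Γ → R) → (Γ → R)) (x y : Γ → R) : Prop :=
  ∀ O : Set ((Γ → R) × (Γ → R)), IsEntourage O →
    ∃ n ≥ 1, (f^[n] x, f^[n] y) ∈ O

/-- `x, y` are asymptotic for `f`. -/
def AsymptoticPair (f : (Γ → R) → (Γ → R)) (x y : Γ → R) : Prop :=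
  ∀ O : Set ((Γ → R) × (Γ → R)), IsEntourage O →
    ∃ N ≥ 1, ∀ n ≥ N, (f^[n] x, f^[n] y) ∈ O

/-- A scrambled pair: proximal but not asymptotic. -/
def ScrambledPair (f : (Γ → R) → (Γ → R)) (x y : Γ → R) : Prop :=
  ProximalPair f x y ∧ ¬ AsymptoticPair f x y

/-- Li–Yorke chaos: existence of an uncountable scrambled set. -/
def LiYorkeChaotic (f : (Γ → R) → (Γ → R)) : Prop :=
  ∃ A : Set (Γ → R), ¬ A.Countable ∧
    ∀ x ∈ A, ∀ y ∈ A, x ≠ y → ScrambledPair f x y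

/-- Topological transitivity of `(R^Γ, f)`. -/
def TopTransitive [TopologicalSpace R] (f : (Γ → R) → (Γ → R)) : Prop :=
  ∀ U V : Set (Γ → R), IsOpen U → IsOpen V → U.Nonempty → V.Nonempty →
    ∃ n ≥ 1, (f^[n] '' U ∩ V).Nonempty

/-- The set of periodic points of `f`. -/
def perPoints (f : (Γ → R) → (Γ → R)) : Set (Γ → R) :=
  {x | ∃ n ≥ 1, f^[n] x = x}

/-- Devaney chaos: sensitive, topologically transitive, dense periodic points. -/
def DevaneyChaotic [TopologicalSpace R] (f : (Γ → R) → (Γ → R)) : Prop :=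
  Sensitive f ∧ TopTransitive f ∧ Dense (perPoints f)

open Classical in
/-- The point `x^A ∈ R^Γ` built from `A ⊆ ℕ` along the orbit of `ν`. -/
noncomputable def xA [Zero R] [One R] (φ : Γ → Γ) (ν : Γ) (A : Set ℕ) : Γ → R :=
  fun α => if ∃ p : ℕ, p ∈ A ∧ α = φ^[p * (p + 1) / 2] ν then 1 else 0

end WGShift

open WGShift

private lemma tri_succ (p : ℕ) : (p + 1) * (p + 1 + 1) / 2 = p * (p + 1) / 2 + (p + 1) := by
  obtain ⟨k, hk⟩ := Nat.even_mul_succ_self p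
  have h2 : (p + 1) * (p + 1 + 1) = p * (p + 1) + 2 * (p + 1) := by ring
  omega

private lemma tri_mono : Monotone (fun p : ℕ => p * (p + 1) / 2) :=
  monotone_nat_of_le_succ fun p => by
    show p * (p + 1) / 2 ≤ (p + 1) * (p + 1 + 1) / 2
    have := tri_succ p; omega

private lemma tri_gap {v q p : ℕ} (h1 : q * (q + 1) / 2 < v)
    (h2 : v ≤ q * (q + 1) / 2 + q) : v ≠ p * (p + 1) / 2 := by
  intro hv
  rcases le_or_gt p q with h | h
  · have hpq : p * (p + 1) / 2 ≤ q * (q + 1) / 2 := tri_mono h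
    omega
  · have h' : q + 1 ≤ p := h
    have h2' : (q + 1) * (q + 1 + 1) / 2 ≤ p * (p + 1) / 2 := tri_mono h'
    have hs := tri_succ q
    omega

private lemma wshift_iterate {Γ R : Type*} [CommMonoid R] (φ : Γ → Γ) (w : Γ → R)
    (n : ℕ) (x : Γ → R) (α : Γ) :
    (wshift φ w)^[n] x α = (∏ k ∈ Finset.range n, w (φ^[k] α)) * x (φ^[n] α) := by
  induction n generalizing α with
  | zero => simp
  | succ n ih =>
    have h1 : (wshift φ w)^[n + 1] x α = w α * (wshift φ w)^[n] x (φ α) := by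
      rw [Function.iterate_succ_apply']; rfl
    rw [h1, ih (φ α), Finset.prod_range_succ']
    simp only [← Function.iterate_succ_apply, Function.iterate_zero_apply,
      Nat.succ_eq_add_one, Nat.add_comm 1]
    rw [mul_left_comm, mul_assoc]

theorem stmt9 {R Γ : Type*} [Field R] [Fintype R]
    [TopologicalSpace R] [DiscreteTopology R] [Nontrivial Γ]
    (φ : Γ → Γ) (w : Γ → R) (ν : Γ)
    (hν : ¬ IsQuasiPeriodic φ ν) (hw : ∀ n : ℕ, w (φ^[n] ν) ≠ 0)
    (E F : Set ℕ) :
    ProximalPair (wshift φ w) (xA φ ν E) (xA φ ν F) := by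
  classical
  have hinj : ∀ i j : ℕ, φ^[i] ν = φ^[j] ν → i = j := by
    intro i j hij
    by_contra hne
    rcases Nat.lt_or_ge i j with h | h
    · exact hν ⟨j + 1, i + 1, by omega, by omega, by
        rw [Function.iterate_succ_apply', Function.iterate_succ_apply', hij]⟩
    · have h' : i > j := lt_of_le_of_ne h (Ne.symm hne)
      exact hν ⟨i + 1, j + 1, by omega, by omega, by
        rw [Function.iterate_succ_apply', Function.iterate_succ_apply', hij]⟩
  intro O hO
  obtain ⟨M, hMfin, hMO⟩ := hO
  -- witness data for points whose orbit hits the orbit of ν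
  let hit : Γ → Prop := fun α => ∃ a b : ℕ, φ^[a] α = φ^[b] ν
  let na : Γ → ℕ := fun α => if h : hit α then h.choose else 0
  let ma : Γ → ℕ := fun α => if h : hit α then h.choose_spec.choose else 0
  have hspec : ∀ α, hit α → φ^[na α] α = φ^[ma α] ν := by
    intro α h
    simp only [na, ma, dif_pos h]
    exact h.choose_spec.choose_spec
  set s := hMfin.toFinset with hs
  set D := s.sup na with hD
  set Mx := s.sup ma with hMx
  set q := D + Mx + 2 with hq
  set n := q * (q + 1) / 2 + 1 + D with hn
  have hn1 : 1 ≤ n := by omega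
  refine ⟨n, hn1, hMO ?_⟩
  intro α hα
  have hαs : α ∈ s := hMfin.mem_toFinset.mpr hα
  -- key claim : φ^[n] α is not of the form φ^[p(p+1)/2] ν
  have key : ∀ p : ℕ, φ^[n] α ≠ φ^[p * (p + 1) / 2] ν := by
    intro p hp
    have hitα : hit α := ⟨n, p * (p + 1) / 2, hp⟩
    have hna : na α ≤ D := Finset.le_sup hαs
    have hma : ma α ≤ Mx := Finset.le_sup hαs
    have hnge : na α ≤ n := by omega
    have horb : φ^[n] α = φ^[(n - na α) + ma α] ν := by
      have h3 : φ^[(n - na α) + na α] α = φ^[n - na α] (φ^[na α] α) :=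
        Function.iterate_add_apply φ _ _ α
      rw [Nat.sub_add_cancel hnge] at h3
      rw [h3, hspec α hitα, ← Function.iterate_add_apply]
    rw [horb] at hp
    have heq : (n - na α) + ma α = p * (p + 1) / 2 := hinj _ _ hp
    have hlow : q * (q + 1) / 2 < (n - na α) + ma α := by omega
    have hhigh : (n - na α) + ma α ≤ q * (q + 1) / 2 + q := by omega
    exact absurd heq (tri_gap hlow hhigh)
  -- conclude coordinatewise equality
  simp only [shiftOM, Set.mem_setOf_eq] at *
  rw [wshift_iterate, wshift_iterate]
  congr 1
  simp only [xA]
  rw [if_neg, if_neg]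
  · rintro ⟨p, -, hpeq⟩; exact key p hpeq
  · rintro ⟨p, -, hpeq⟩; exact key p hpeq
end

section
/- Let R be a finite field equipped with the discrete topology, Γ a set with at least two elements, φ: Γ → Γ a map, and w ∈ R^Γ a weight vector. Then the dynamical system (R^Γ, σ_{φ,w}) is Devaney chaotic if and only if it is topologically transitive. -/
open Function Set

open WGShift

section MyAux
variable {Γ R : Type*}

lemma wshift_iter [Field R] (φ : Γ → Γ) (w : Γ → R) (n : ℕ) (x : Γ → R) (α : Γ) :
    (wshift φ w)^[n] x α = (∏ k ∈ Finset.range n, w (φ^[k] α)) * x (φ^[n] α) := by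
  induction n generalizing x with
  | zero => simp
  | succ n ih =>
      rw [Function.iterate_succ_apply, ih, Finset.prod_range_succ,
        Function.iterate_succ_apply']
      simp [wshift, mul_assoc]

lemma box_open [TopologicalSpace R] [DiscreteTopology R] (I : Finset Γ) (u : Γ → R) :
    IsOpen {y : Γ → R | ∀ a ∈ I, y a = u a} := by
  have h : {y : Γ → R | ∀ a ∈ I, y a = u a} = Set.pi ↑I (fun a => {u a}) := by
    ext y; simp [Set.mem_pi]
  rw [h]
  exact isOpen_set_pi I.finite_toSet (fun a _ => isOpen_discrete _)

lemma exists_box [TopologicalSpace R] [DiscreteTopology R]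
    {U : Set (Γ → R)} (hU : IsOpen U) {x : Γ → R} (hx : x ∈ U) :
    ∃ I : Finset Γ, {y : Γ → R | ∀ a ∈ I, y a = x a} ⊆ U := by
  obtain ⟨I, u, hu, hsub⟩ := isOpen_pi_iff.1 hU x hx
  refine ⟨I, fun y hy => hsub (Set.mem_pi.2 fun a ha => ?_)⟩
  rw [Set.mem_setOf_eq] at hy
  rw [hy a ha]
  exact (hu a ha).2

end MyAux

section Aux

variable {Γ R : Type*} [Field R]

lemma aux_anchor_le {ψ : Γ → Γ} (hinj : Function.Injective ψ) {I : Finset Γ}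
    (hI : ∀ d, ∀ a ∈ I, ψ^[d] a ∈ I → d = 0)
    {a b : Γ} (ha : a ∈ I) (hb : b ∈ I) {s t : ℕ} (hst : s ≤ t) (h : ψ^[s] a = ψ^[t] b) :
    a = b ∧ s = t := by
  obtain ⟨d, rfl⟩ := Nat.exists_eq_add_of_le hst
  rw [Function.iterate_add_apply] at h
  have h2 : a = ψ^[d] b := (hinj.iterate s) h
  have hd : d = 0 := hI d b hb (h2 ▸ ha)
  subst hd
  simp only [Function.iterate_zero_apply] at h2
  exact ⟨h2, by omega⟩

lemma aux_anchor {ψ : Γ → Γ} (hinj : Function.Injective ψ) {I : Finset Γ}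
    (hI : ∀ d, ∀ a ∈ I, ψ^[d] a ∈ I → d = 0)
    {a b : Γ} (ha : a ∈ I) (hb : b ∈ I) {s t : ℕ} (h : ψ^[s] a = ψ^[t] b) :
    a = b ∧ s = t := by
  rcases le_total s t with hst | hst
  · exact aux_anchor_le hinj hI ha hb hst h
  · obtain ⟨h1, h2⟩ := aux_anchor_le hinj hI hb ha hst h.symm
    exact ⟨h1.symm, h2.symm⟩

/-- value to put at `γ` when `ψ^[k] γ = ψ^[l] α`. -/
def auxVal (Wn : Γ → R) (ψ : Γ → Γ) (x : Γ → R) (γ α : Γ) (k l : ℕ) : R :=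
  (∏ m ∈ Finset.range k, Wn (ψ^[m] γ)) * (∏ m ∈ Finset.range l, Wn (ψ^[m] α))⁻¹ * x α

lemma auxVal_indep_le {Wn : Γ → R} {ψ : Γ → Γ} {x : Γ → R} (hW : ∀ γ, Wn γ ≠ 0)
    {γ α : Γ} {k l k' l' : ℕ} (hk : k ≤ k') (hsum : k' + l = k + l')
    (h1 : ψ^[k] γ = ψ^[l] α) :
    auxVal Wn ψ x γ α k l = auxVal Wn ψ x γ α k' l' := by
  obtain ⟨d, rfl⟩ := Nat.exists_eq_add_of_le hk
  have hl' : l' = l + d := by omega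
  subst hl'
  have hterm : ∀ m : ℕ, ψ^[k + m] γ = ψ^[l + m] α := by
    intro m
    rw [add_comm k m, add_comm l m, Function.iterate_add_apply, Function.iterate_add_apply, h1]
  unfold auxVal
  rw [Finset.prod_range_add, Finset.prod_range_add]
  have hC : (∏ m ∈ Finset.range d, Wn (ψ^[k + m] γ)) = ∏ m ∈ Finset.range d, Wn (ψ^[l + m] α) :=
    Finset.prod_congr rfl (fun m _ => by rw [hterm m])
  rw [hC]
  have hB : (∏ m ∈ Finset.range l, Wn (ψ^[m] α)) ≠ 0 :=
    Finset.prod_ne_zero_iff.2 (fun m _ => hW _)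
  have hD : (∏ m ∈ Finset.range d, Wn (ψ^[l + m] α)) ≠ 0 :=
    Finset.prod_ne_zero_iff.2 (fun m _ => hW _)
  field_simp

lemma auxVal_indep {Wn : Γ → R} {ψ : Γ → Γ} {x : Γ → R}
    (hinj : Function.Injective ψ) {I : Finset Γ}
    (hI : ∀ d, ∀ a ∈ I, ψ^[d] a ∈ I → d = 0) (hW : ∀ γ, Wn γ ≠ 0)
    {γ α α' : Γ} {k l k' l' : ℕ} (hα : α ∈ I) (hα' : α' ∈ I)
    (h1 : ψ^[k] γ = ψ^[l] α) (h2 : ψ^[k'] γ = ψ^[l'] α') :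
    auxVal Wn ψ x γ α k l = auxVal Wn ψ x γ α' k' l' := by
  have e1 : ψ^[k' + l] α = ψ^[k + l'] α' := by
    have a1 : ψ^[k' + k] γ = ψ^[k' + l] α := by
      rw [Function.iterate_add_apply, Function.iterate_add_apply, h1]
    have a2 : ψ^[k + k'] γ = ψ^[k + l'] α' := by
      rw [Function.iterate_add_apply, Function.iterate_add_apply, h2]
    rw [← a1, add_comm k' k, a2]
  obtain ⟨rfl, hsum⟩ := aux_anchor hinj hI hα hα' e1
  rcases le_total k k' with hk | hk
  · exact auxVal_indep_le hW hk hsum h1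
  · exact (auxVal_indep_le hW hk hsum.symm h2).symm

open Classical in
/-- The periodic point construction. -/
noncomputable def auxY (Wn : Γ → R) (ψ : Γ → Γ) (x : Γ → R) (I : Finset Γ) (γ : Γ) : R :=
  if h : ∃ t : Γ × ℕ × ℕ, t.1 ∈ I ∧ ψ^[t.2.1] γ = ψ^[t.2.2] t.1 then
    auxVal Wn ψ x γ (Classical.choose h).1 (Classical.choose h).2.1 (Classical.choose h).2.2
  else 0

lemma auxY_eq {Wn : Γ → R} {ψ : Γ → Γ} {x : Γ → R}
    (hinj : Function.Injective ψ) {I : Finset Γ}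
    (hI : ∀ d, ∀ a ∈ I, ψ^[d] a ∈ I → d = 0) (hW : ∀ γ, Wn γ ≠ 0)
    {γ α : Γ} {k l : ℕ} (hα : α ∈ I) (h : ψ^[k] γ = ψ^[l] α) :
    auxY Wn ψ x I γ = auxVal Wn ψ x γ α k l := by
  have hex : ∃ t : Γ × ℕ × ℕ, t.1 ∈ I ∧ ψ^[t.2.1] γ = ψ^[t.2.2] t.1 := ⟨(α, k, l), hα, h⟩
  rw [auxY, dif_pos hex]
  exact auxVal_indep hinj hI hW (Classical.choose_spec hex).1 hα (Classical.choose_spec hex).2 h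

lemma auxY_mem {Wn : Γ → R} {ψ : Γ → Γ} {x : Γ → R}
    (hinj : Function.Injective ψ) {I : Finset Γ}
    (hI : ∀ d, ∀ a ∈ I, ψ^[d] a ∈ I → d = 0) (hW : ∀ γ, Wn γ ≠ 0)
    {α : Γ} (hα : α ∈ I) : auxY Wn ψ x I α = x α := by
  rw [auxY_eq hinj hI hW hα (rfl : ψ^[0] α = ψ^[0] α)]
  simp [auxVal]

lemma auxY_step {Wn : Γ → R} {ψ : Γ → Γ} {x : Γ → R}
    (hinj : Function.Injective ψ) {I : Finset Γ}
    (hI : ∀ d, ∀ a ∈ I, ψ^[d] a ∈ I → d = 0) (hW : ∀ γ, Wn γ ≠ 0) (γ : Γ) :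
    auxY Wn ψ x I γ = Wn γ * auxY Wn ψ x I (ψ γ) := by
  by_cases h : ∃ t : Γ × ℕ × ℕ, t.1 ∈ I ∧ ψ^[t.2.1] γ = ψ^[t.2.2] t.1
  · obtain ⟨⟨α, k, l⟩, hα, hrel⟩ := h
    have hγ : ψ^[k + 1] γ = ψ^[l + 1] α := by
      rw [Function.iterate_succ_apply', Function.iterate_succ_apply', hrel]
    have hψγ : ψ^[k] (ψ γ) = ψ^[l + 1] α := by
      rw [← Function.iterate_succ_apply]; exact hγ
    rw [auxY_eq hinj hI hW hα hγ, auxY_eq hinj hI hW hα hψγ]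
    unfold auxVal
    rw [Finset.prod_range_succ']
    simp only [Function.iterate_succ_apply, Function.iterate_zero_apply]
    ring
  · have h2 : ¬ ∃ t : Γ × ℕ × ℕ, t.1 ∈ I ∧ ψ^[t.2.1] (ψ γ) = ψ^[t.2.2] t.1 := by
      rintro ⟨⟨α, k, l⟩, hα, hrel⟩
      exact h ⟨(α, k + 1, l), hα, by rw [Function.iterate_succ_apply]; exact hrel⟩
    rw [auxY, dif_neg h, auxY, dif_neg h2, mul_zero]

end Aux

theorem stmt17 {R Γ : Type*} [Field R] [Fintype R]
    [TopologicalSpace R] [DiscreteTopology R] [Nontrivial Γ]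
    (φ : Γ → Γ) (w : Γ → R) :
    DevaneyChaotic (wshift φ w) ↔ TopTransitive (wshift φ w) := by
  classical
  constructor
  · exact fun h => h.2.1
  intro ht
  -- (A) all weights are nonzero
  have hA : ∀ α : Γ, w α ≠ 0 := by
    intro α h0
    obtain ⟨n, hn1, z, ⟨x, _, hx⟩, hzV⟩ := ht Set.univ
      {y : Γ → R | ∀ a ∈ ({α} : Finset Γ), y a = (fun _ => (1 : R)) a}
      isOpen_univ (box_open _ _) ⟨0, trivial⟩ ⟨(fun _ => 1), fun a _ => rfl⟩
    have h1 := hzV α (Finset.mem_singleton_self α)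
    rw [← hx, wshift_iter] at h1
    have hz0 : (∏ k ∈ Finset.range n, w (φ^[k] α)) = 0 :=
      Finset.prod_eq_zero (Finset.mem_range.2 hn1) (by simpa using h0)
    rw [hz0, zero_mul] at h1
    exact one_ne_zero h1.symm
  -- (B) no quasi-periodic points, hence injective orbits
  have horb : ∀ (α : Γ) (i j : ℕ), φ^[i] α = φ^[j] α → i = j := by
    have hB : ∀ (α : Γ) (i j : ℕ), 1 ≤ j → j < i → φ^[i] α ≠ φ^[j] α := by
      intro α i j hj hji heq
      set p := i - j with hp
      have hp1 : 1 ≤ p := by omega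
      set β := φ^[j] α with hβ
      have hper : φ^[p] β = β := by
        rw [hβ, ← Function.iterate_add_apply]
        have hij : p + j = i := by omega
        rw [hij, heq]
      have hcyc : ∀ m : ℕ, φ^[m] β = φ^[m % p] β := by
        intro m
        conv_lhs => rw [← Nat.mod_add_div m p]
        rw [Function.iterate_add_apply, Function.iterate_mul,
          Function.iterate_fixed hper]
      set C : Finset Γ := Finset.image (fun r => φ^[r] β) (Finset.range p) with hC
      obtain ⟨n, hn1, z, ⟨x, hxU, hx⟩, hzV⟩ := ht
        {y : Γ → R | ∀ a ∈ C, y a = (fun _ => (0 : R)) a}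
        {y : Γ → R | ∀ a ∈ ({β} : Finset Γ), y a = (fun _ => (1 : R)) a}
        (box_open _ _) (box_open _ _) ⟨(fun _ => 0), fun a _ => rfl⟩
        ⟨(fun _ => 1), fun a _ => rfl⟩
    -- z β = 1 but z β = stuff * x (φ^[n] β) = stuff * 0
      have h1 := hzV β (Finset.mem_singleton_self β)
      rw [← hx, wshift_iter] at h1
      have hmem : φ^[n] β ∈ C := by
        rw [hcyc n, hC]
        exact Finset.mem_image.2 ⟨n % p, Finset.mem_range.2 (Nat.mod_lt _ (by omega)), rfl⟩
      have hx0 : x (φ^[n] β) = 0 := hxU _ hmem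
      rw [hx0, mul_zero] at h1
      exact one_ne_zero h1.symm
    intro α i j heq
    by_contra hne
    rcases Nat.lt_or_ge i j with hij | hij
    · rcases Nat.eq_zero_or_pos i with rfl | hi
      · -- φ^[j] α = α with j ≥ 1
        simp only [Function.iterate_zero_apply] at heq
        have h2 : φ^[j + 1] α = φ^[1] α := by
          rw [Function.iterate_succ_apply', ← heq, Function.iterate_one]
        exact hB α (j + 1) 1 le_rfl (by omega) h2
      · exact hB α j i hi hij heq.symm
    · have hij' : j < i := by omega
      rcases Nat.eq_zero_or_pos j with rfl | hj
      · simp only [Function.iterate_zero_apply] at heq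
        have h2 : φ^[i + 1] α = φ^[1] α := by
          rw [Function.iterate_succ_apply', heq, Function.iterate_one]
        exact hB α (i + 1) 1 le_rfl (by omega) h2
      · exact hB α i j hj hij' heq
  -- (C) φ is injective
  have hC : Function.Injective φ := by
    intro a b hab
    by_contra hne
    set u : Γ → R := fun γ => if γ = b then 1 else 0 with hu
    obtain ⟨n, hn1, z, ⟨x, _, hx⟩, hzV⟩ := ht Set.univ
      {y : Γ → R | ∀ c ∈ ({a, b} : Finset Γ), y c = u c}
      isOpen_univ (box_open _ _) ⟨0, trivial⟩ ⟨u, fun c _ => rfl⟩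
    have hiter : φ^[n] a = φ^[n] b := by
      cases n with
      | zero => exact absurd hn1 (by omega)
      | succ m => rw [Function.iterate_succ_apply, Function.iterate_succ_apply, hab]
    have ha0 : z a = 0 := by simpa [hu, hne] using hzV a (by simp)
    have hb1 : z b = 1 := by simpa [hu] using hzV b (by simp)
    rw [← hx, wshift_iter] at ha0 hb1
    have hP : (∏ k ∈ Finset.range n, w (φ^[k] a)) ≠ 0 :=
      Finset.prod_ne_zero_iff.2 (fun k _ => hA _)
    have hxa : x (φ^[n] a) = 0 := (mul_eq_zero.1 ha0).resolve_left hP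
    rw [← hiter, hxa, mul_zero] at hb1
    exact one_ne_zero hb1.symm
  refine ⟨?_, ht, ?_⟩
  -- Sensitivity
  · obtain ⟨α₀⟩ : Nonempty Γ := inferInstance
    refine ⟨shiftOM {α₀}, ⟨{α₀}, Set.finite_singleton _, subset_rfl⟩, ?_⟩
    intro x U hU hxU
    obtain ⟨I, hI⟩ := exists_box hU hxU
    have hfin : ({m : ℕ | φ^[m] α₀ ∈ (I : Set Γ)}).Finite := by
      have hinj : Function.Injective (fun m : ℕ => φ^[m] α₀) := fun i j h => horb α₀ i j h
      exact Set.Finite.preimage hinj.injOn I.finite_toSet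
    obtain ⟨N, hN⟩ := hfin.bddAbove
    set n := N + 1 with hn
    have hnotI : φ^[n] α₀ ∉ I := by
      intro hmem
      have := hN (Set.mem_setOf_eq ▸ hmem)
      omega
    set y := Function.update x (φ^[n] α₀) (x (φ^[n] α₀) + 1) with hy
    have hyU : y ∈ U := by
      apply hI
      intro a ha
      rw [hy, Function.update_apply, if_neg (by rintro rfl; exact hnotI ha)]
    refine ⟨y, hyU, n, ?_⟩
    intro hmem
    have h1 : (wshift φ w)^[n] x α₀ = (wshift φ w)^[n] y α₀ := hmem α₀ rfl
    rw [wshift_iter, wshift_iter, hy, Function.update_self] at h1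
    have hP : (∏ k ∈ Finset.range n, w (φ^[k] α₀)) ≠ 0 :=
      Finset.prod_ne_zero_iff.2 (fun k _ => hA _)
    have h2 := mul_left_cancel₀ hP h1
    simp at h2
  -- Dense periodic points
  · rw [dense_iff_inter_open]
    rintro U hU ⟨x, hxU⟩
    obtain ⟨I, hI⟩ := exists_box hU hxU
    -- finite return-time set
    set T : Set ℕ := {t : ℕ | ∃ a ∈ (I : Set Γ), ∃ b ∈ (I : Set Γ), φ^[t] a = b} with hT
    have hTfin : T.Finite := by
      have hsub : T ⊆ ⋃ a ∈ (I : Set Γ), ⋃ b ∈ (I : Set Γ), {t : ℕ | φ^[t] a = b} := by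
        rintro t ⟨a, ha, b, hb, hab⟩
        exact Set.mem_biUnion ha (Set.mem_biUnion hb hab)
      refine Set.Finite.subset ?_ hsub
      refine Set.Finite.biUnion I.finite_toSet (fun a _ => ?_)
      refine Set.Finite.biUnion I.finite_toSet (fun b _ => ?_)
      refine Set.Subsingleton.finite ?_
      intro s hs t htt
      exact horb a s t (hs.trans htt.symm)
    obtain ⟨N, hN⟩ := hTfin.bddAbove
    set n := N + 1 with hn
    have hn1 : 1 ≤ n := by omega
    set ψ := φ^[n] with hψ
    have hψk : ∀ k : ℕ, ψ^[k] = φ^[n * k] := fun k => (Function.iterate_mul φ n k).symm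
    have hψinj : Function.Injective ψ := hC.iterate n
    have hIcond : ∀ d, ∀ a ∈ I, ψ^[d] a ∈ I → d = 0 := by
      intro d a ha hmem
      by_contra hd
      have hdT : n * d ∈ T := ⟨a, ha, ψ^[d] a, hmem, by rw [← hψk]⟩
      have h1 := hN hdT
      have h2 : n * 1 ≤ n * d := Nat.mul_le_mul_left n (by omega)
      omega
    set Wn : Γ → R := fun γ => ∏ j ∈ Finset.range n, w (φ^[j] γ) with hWn
    have hWne : ∀ γ, Wn γ ≠ 0 := fun γ => Finset.prod_ne_zero_iff.2 (fun j _ => hA _)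
    set y := auxY Wn ψ x I with hy
    refine ⟨y, hI (fun a ha => auxY_mem hψinj hIcond hWne ha), n, hn1, ?_⟩
    funext γ
    rw [wshift_iter]
    exact (auxY_step hψinj hIcond hWne γ).symm
end
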